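/- arXiv:2312.16398 — 2 statements merged into one kernel-verified Lean document; each statement's English description precedes it below -/
import Mathlib

section
/- Let X be a topological space that is the union of finitely many compact connected linearly ordered subspaces. Let U be an orderly open neighborhood of p whose boundary is contained in an open dense subset D of X. Then there exists an orderly open neighborhood V of p with closure(V) contained in U and U \ V contained in D. -/
open Set Topology

universe u

/-- A topological space is a LOTS if it is homeomorphic to a linear order with the order topology. -/
def IsLOTS (Y : Type u) [TopologicalSpace Y] : Prop :=
  ∃ (L : Type u) (lo : LinearOrder L) (ts : TopologicalSpace L),
    @OrderTopology L ts lo.toPartialOrder.toPreorder ∧ Nonempty (Y ≃ₜ L)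

/-- The set of locally ordered points of `X`. -/
def LO (X : Type u) [TopologicalSpace X] : Set X :=
  {x | ∃ U : Set X, IsOpen U ∧ x ∈ U ∧ IsLOTS ↥U}

/-- Orderly open sets. -/
def Orderly {X : Type u} [TopologicalSpace X] (U : Set X) : Prop :=
  IsOpen U ∧ U = interior (closure U) ∧ IsConnected U ∧
    (closure U \ U).Finite ∧ closure U \ U ⊆ LO X

/-- Topology of pointwise convergence on the homeomorphism group. -/
instance homPt (X : Type u) [TopologicalSpace X] : TopologicalSpace (X ≃ₜ X) :=
  TopologicalSpace.induced (fun f => (f : X → X)) Pi.topologicalSpace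

/-!
`X` is compact Hausdorff and locally connected. Each of the finitely many boundary points `x` of
`U` has a chart from a connected linear order onto a small open neighbourhood that lies in `D`,
misses `p` and the other boundary points; in it, cut out a closed arc `C x` around `x`, and put
`V = U \ ⋃ C x`. The boundary of `V` consists of endpoints of these arcs. Since `x ∉ U`, the set
`C x ∩ U` consists of at most two half-open arcs, one on each side of `x`; prolonged slightly past
their endpoints they become open arcs meeting `V` in an interval, so a separation of `V` would
extend to a separation of `U`.
-/

open Function

section OrderTopology

variable {α : Type*} [LinearOrder α] [TopologicalSpace α] [OrderTopology α]

theorem isPreconnected_Icc_of_preconnectedSpace [PreconnectedSpace α] (a b : α) :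
    IsPreconnected (Icc a b) := by
  rcases le_or_gt a b with hab | hab
  · rw [← Subtype.range_coe (s := Icc a b), ← (projIcc_surjective hab).range_comp]
    exact isPreconnected_range (continuous_subtype_val.comp continuous_projIcc)
  · rw [Icc_eq_empty_of_lt hab]
    exact isPreconnected_empty

theorem Set.OrdConnected.isPreconnected_of_preconnectedSpace [PreconnectedSpace α] {s : Set α}
    (hs : s.OrdConnected) : IsPreconnected s :=
  isPreconnected_of_forall_pair fun x hx y hy =>
    ⟨uIcc x y, hs.uIcc_subset hx hy, left_mem_uIcc, right_mem_uIcc,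
      isPreconnected_Icc_of_preconnectedSpace _ _⟩

theorem locallyConnectedSpace_of_preconnectedSpace [PreconnectedSpace α] :
    LocallyConnectedSpace α :=
  locallyConnectedSpace_iff_connected_subsets.2 fun _ _ hs =>
    let ⟨b, c, _, hbc, hsub⟩ := exists_Icc_mem_subset_of_mem_nhds hs
    ⟨Icc b c, hbc, isPreconnected_Icc_of_preconnectedSpace b c, hsub⟩

theorem exists_Iic_mem_nhds_Ioc_subset_Ioo [DenselyOrdered α] (ℓ : α) :
    ∃ b c, Iic b ∈ 𝓝 ℓ ∧ Ioc ℓ b ⊆ Ioo ℓ c := by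
  by_cases h : ∃ a, ℓ < a
  · obtain ⟨a, ha⟩ := h
    obtain ⟨b, hℓb, hba⟩ := exists_between ha
    exact ⟨b, a, Iic_mem_nhds hℓb, Ioc_subset_Ioo_right hba⟩
  · push Not at h
    refine ⟨ℓ, ℓ, ?_, by simp⟩
    rw [show Iic ℓ = univ from eq_univ_of_forall h]
    exact Filter.univ_mem

theorem Icc_subset_closure_interior_Icc [DenselyOrdered α] {a b ℓ : α} (h : Icc a b ∈ 𝓝 ℓ) :
    Icc a b ⊆ closure (interior (Icc a b)) := by
  have hℓ : ℓ ∈ Icc a b := mem_of_mem_nhds h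
  rcases (hℓ.1.trans hℓ.2).eq_or_lt with rfl | hab
  · obtain rfl : ℓ = a := by simpa using hℓ
    rw [Icc_self] at h ⊢
    exact singleton_subset_iff.2 (subset_closure (mem_interior_iff_mem_nhds.2 h))
  · calc Icc a b = closure (Ioo a b) := (closure_Ioo hab.ne).symm
      _ ⊆ closure (interior (Icc a b)) :=
        closure_mono (interior_maximal Ioo_subset_Icc_self isOpen_Ioo)

theorem IsOpenMap.image_Icc_sdiff_interior_subset {X : Type*} [TopologicalSpace X] {f : α → X}
    (hf : IsOpenMap f) (a b : α) : f '' Icc a b \ interior (f '' Icc a b) ⊆ f '' {a, b} := by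
  rintro _ ⟨⟨w, hw, rfl⟩, hwi⟩
  refine mem_image_of_mem f ?_
  by_contra hne
  simp only [mem_insert_iff, mem_singleton_iff, not_or] at hne
  exact hwi (interior_maximal (image_mono Ioo_subset_Icc_self) (hf _ isOpen_Ioo)
    ⟨w, ⟨hw.1.lt_of_ne' hne.1, hw.2.lt_of_ne hne.2⟩, rfl⟩)

end OrderTopology

section LOTS

variable {X : Type u} [TopologicalSpace X]

theorem IsLOTS.t2Space (h : IsLOTS X) : T2Space X := by
  obtain ⟨L, _, _, _, ⟨e⟩⟩ := h
  exact e.isEmbedding.t2Space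

theorem IsLOTS.locallyConnectedSpace [PreconnectedSpace X] (h : IsLOTS X) :
    LocallyConnectedSpace X := by
  obtain ⟨L, _, _, _, ⟨e⟩⟩ := h
  have : PreconnectedSpace L := e.surjective.denseRange.preconnectedSpace e.continuous
  have := locallyConnectedSpace_of_preconnectedSpace (α := L)
  exact e.locallyConnectedSpace

theorem isOpen_LO : IsOpen (LO X) :=
  isOpen_iff_forall_mem_open.2 fun _ ⟨W, hW, hxW, hWL⟩ =>
    ⟨W, fun _ hz => ⟨W, hW, hz, hWL⟩, hW, hxW⟩

end LOTS

section ClosedCover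

variable {X : Type*} [TopologicalSpace X] {ι : Type*} [Finite ι] {L : ι → Set X}

theorem t2Space_of_isClosed_cover (hclosed : ∀ i, IsClosed (L i)) (hcover : ⋃ i, L i = univ)
    (hT2 : ∀ i, T2Space (L i)) : T2Space X := by
  have hdiag : diagonal X = ⋃ i, Prod.map (↑) (↑) '' diagonal (L i) := by
    ext ⟨x, y⟩
    simp only [mem_diagonal_iff, mem_iUnion, mem_image, Prod.exists, Prod.map, Prod.mk.injEq]
    constructor
    · rintro rfl
      obtain ⟨i, hi⟩ := mem_iUnion.1 (hcover.symm ▸ mem_univ x)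
      exact ⟨i, ⟨x, hi⟩, ⟨x, hi⟩, rfl, rfl, rfl⟩
    · rintro ⟨i, a, b, hab, rfl, rfl⟩
      exact congrArg Subtype.val hab
  rw [t2_iff_isClosed_diagonal, hdiag]
  exact isClosed_iUnion_of_finite fun i =>
    ((hclosed i).isClosedEmbedding_subtypeVal.prodMap
      (hclosed i).isClosedEmbedding_subtypeVal).isClosedMap _ isClosed_diagonal

theorem locallyConnectedSpace_of_isClosed_cover (hclosed : ∀ i, IsClosed (L i))
    (hcover : ⋃ i, L i = univ) (hloc : ∀ i, LocallyConnectedSpace (L i)) :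
    LocallyConnectedSpace X := by
  refine locallyConnectedSpace_iff_connected_subsets.2 fun x O hO => ?_
  have hpiece : ∀ i, ∃ S ⊆ O, x ∈ S ∧ IsPreconnected S ∧ S ∈ 𝓝[L i] x := by
    intro i
    by_cases hi : x ∈ L i
    · obtain ⟨V, hV, hVc, hVO⟩ := locallyConnectedSpace_iff_connected_subsets.1 (hloc i) ⟨x, hi⟩
        _ (continuous_subtype_val.continuousAt.preimage_mem_nhds hO)
      refine ⟨(↑) '' V, image_subset_iff.2 hVO, ⟨_, mem_of_mem_nhds hV, rfl⟩,
        hVc.image _ continuous_subtype_val.continuousOn, ?_⟩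
      rw [nhdsWithin_eq_map_subtype_coe hi]
      exact Filter.image_mem_map hV
    · exact ⟨{x}, singleton_subset_iff.2 (mem_of_mem_nhds hO), rfl, isPreconnected_singleton,
        mem_nhdsWithin.2 ⟨(L i)ᶜ, (hclosed i).isOpen_compl, hi, fun z hz => (hz.1 hz.2).elim⟩⟩
  choose S hSO hxS hSc hSn using hpiece
  refine ⟨⋃ i, S i, ?_, isPreconnected_iUnion ⟨x, mem_iInter.2 hxS⟩ hSc, iUnion_subset hSO⟩
  rw [← nhdsWithin_univ, ← hcover, nhdsWithin_iUnion, Filter.mem_iSup]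
  exact fun i => Filter.mem_of_superset (hSn i) (subset_iUnion S i)

end ClosedCover

section Connectivity

variable {X : Type*} [TopologicalSpace X]

theorem Topology.IsInducing.isClosed_image_of_closure_subset_range {Y : Type*}
    [TopologicalSpace Y] {f : Y → X} (hf : IsInducing f) {s : Set Y} (hs : IsClosed s)
    (h : closure (f '' s) ⊆ range f) : IsClosed (f '' s) := by
  refine isClosed_of_closure_subset fun z hz => ?_
  obtain ⟨w, rfl⟩ := h hz
  refine ⟨w, ?_, rfl⟩
  rw [← hs.closure_eq, hf.closure_eq_preimage_closure_image]
  exact hz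

theorem IsOpenMap.image_subset_closure_interior {Y : Type*} [TopologicalSpace Y] {f : Y → X}
    (hf : IsOpenMap f) (hc : Continuous f) {s : Set Y} (hs : s ⊆ closure (interior s)) :
    f '' s ⊆ closure (interior (f '' s)) :=
  calc f '' s ⊆ f '' closure (interior s) := image_mono hs
    _ ⊆ closure (f '' interior s) := image_closure_subset_closure_image hc
    _ ⊆ closure (interior (f '' s)) := closure_mono (hf.image_interior_subset s)

theorem IsPreconnected.subset_or_disjoint {s U : Set X} (hs : IsPreconnected s) (hU : IsOpen U)
    (h : Disjoint s (closure U \ U)) : s ⊆ U ∨ Disjoint s U := by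
  by_cases hne : (s ∩ U).Nonempty
  · refine .inl (hs.subset_of_closure_inter_subset hU hne fun z hz => ?_)
    by_contra hzU
    exact h.ne_of_mem hz.2 ⟨hz.1, hzU⟩ rfl
  · exact .inr (disjoint_iff_inter_eq_empty.2 (not_nonempty_iff_eq_empty.1 hne))

/-- A separation of `V` extends, piece by piece, to a separation of `U`. -/
theorem IsPreconnected.of_subset_union_iUnion {ι : Type*} {U V : Set X} {O : ι → Set X}
    (hU : IsPreconnected U) (hVU : V ⊆ U) (hV : IsOpen V) (hO : ∀ i, IsOpen (O i))
    (hOd : Pairwise (Disjoint on O)) (hOV : ∀ i, IsPreconnected (O i ∩ V))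
    (hUO : U ⊆ V ∪ ⋃ i, O i) : IsPreconnected V := by
  refine isPreconnected_iff_subset_of_disjoint.2 fun u v hu hv hVuv huv => ?_
  have hAB : Disjoint (V ∩ u) (V ∩ v) := by
    rw [disjoint_iff_inter_eq_empty, ← huv]
    exact Set.ext fun z => ⟨fun h => ⟨h.1.1, h.1.2, h.2.2⟩, fun h => ⟨⟨h.1, h.2.1⟩, h.1, h.2.2⟩⟩
  have hside : ∀ i, O i ∩ V ⊆ V ∩ u ∨ O i ∩ V ⊆ V ∩ v := fun i =>
    (hOV i).subset_or_subset (hV.inter hu) (hV.inter hv) hAB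
      fun z hz => (hVuv hz.2).imp (⟨hz.2, ·⟩) (⟨hz.2, ·⟩)
  set S := {i | O i ∩ V ⊆ V ∩ u}
  set u' := V ∩ u ∪ ⋃ i ∈ S, O i
  set v' := V ∩ v ∪ ⋃ i ∈ Sᶜ, O i
  have hOA : ∀ i ∈ S, ∀ z ∈ O i, z ∉ V ∩ v := fun i hi z hz hzB =>
    hAB.ne_of_mem (hi ⟨hz, hzB.1⟩) hzB rfl
  have hOB : ∀ i ∉ S, ∀ z ∈ O i, z ∉ V ∩ u := fun i hi z hz hzA =>
    hAB.ne_of_mem hzA ((hside i).resolve_left hi ⟨hz, hzA.1⟩) rfl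
  have hdisj : Disjoint u' v' := by
    simp only [u', v', disjoint_union_left, disjoint_union_right, disjoint_iUnion_left,
      disjoint_iUnion_right]
    refine ⟨⟨hAB, fun i hi => Set.disjoint_left.2 (hOA i hi)⟩, fun i hi =>
      ⟨Set.disjoint_left.2 fun z hz hzi => hOB i hi z hzi hz, fun j hj => hOd fun hji => hi ?_⟩⟩
    exact hji ▸ hj
  have hcover : U ⊆ u' ∪ v' := by
    intro z hz
    rcases hUO hz with hzV | hzO
    · exact (hVuv hzV).imp (fun h => .inl ⟨hzV, h⟩) (fun h => .inl ⟨hzV, h⟩)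
    · obtain ⟨i, hi⟩ := mem_iUnion.1 hzO
      by_cases hiS : i ∈ S
      · exact .inl (.inr (mem_biUnion hiS hi))
      · exact .inr (.inr (mem_biUnion hiS hi))
  rcases hU.subset_or_subset ((hV.inter hu).union (isOpen_biUnion fun i _ => hO i))
      ((hV.inter hv).union (isOpen_biUnion fun i _ => hO i)) hdisj hcover with h | h
  · refine .inl fun z hz => (hVuv hz).resolve_right fun hzv => hdisj.ne_of_mem (h (hVU hz)) ?_ rfl
    exact .inl ⟨hz, hzv⟩
  · refine .inr fun z hz => (hVuv hz).resolve_left fun hzu => hdisj.ne_of_mem ?_ (h (hVU hz)) rfl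
    exact .inl ⟨hz, hzu⟩

end Connectivity

section RemoveClosed

variable {X : Type*} [TopologicalSpace X] {ι : Type*} {U : Set X} {s : Set ι} {C : ι → Set X}

theorem disjoint_closure_sdiff_biUnion_interior {i : ι} (hi : i ∈ s) :
    Disjoint (closure (U \ ⋃ j ∈ s, C j)) (interior (C i)) :=
  (Set.disjoint_left.2 fun _ hz hzi => hz.2 (mem_biUnion hi (interior_subset hzi))).closure_left
    isOpen_interior

theorem closure_sdiff_biUnion_subset (h : ∀ z ∈ closure U \ U, ∃ i ∈ s, z ∈ interior (C i)) :
    closure (U \ ⋃ i ∈ s, C i) ⊆ U := by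
  intro z hz
  by_contra hzU
  obtain ⟨i, hi, hzi⟩ := h z ⟨closure_mono sdiff_subset hz, hzU⟩
  exact (disjoint_closure_sdiff_biUnion_interior hi).ne_of_mem hz hzi rfl

theorem sdiff_biUnion_eq_interior_closure (hV : IsOpen (U \ ⋃ i ∈ s, C i))
    (hcl : closure (U \ ⋃ i ∈ s, C i) ⊆ U) (hC : ∀ i ∈ s, C i ⊆ closure (interior (C i))) :
    U \ ⋃ i ∈ s, C i = interior (closure (U \ ⋃ i ∈ s, C i)) := by
  refine hV.subset_interior_closure.antisymm fun z hz => ⟨hcl (interior_subset hz), fun hzC => ?_⟩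
  obtain ⟨i, hi, hzi⟩ := mem_iUnion₂.1 hzC
  obtain ⟨w, hw, hwi⟩ := mem_closure_iff.1 (hC i hi hzi) _ isOpen_interior hz
  exact (disjoint_closure_sdiff_biUnion_interior hi).ne_of_mem (interior_subset hw) hwi rfl

theorem closure_sdiff_biUnion_sdiff_subset (hcl : closure (U \ ⋃ i ∈ s, C i) ⊆ U) :
    closure (U \ ⋃ i ∈ s, C i) \ (U \ ⋃ i ∈ s, C i) ⊆ ⋃ i ∈ s, C i \ interior (C i) := by
  rintro z ⟨hz, hzV⟩
  obtain ⟨i, hi, hzi⟩ := mem_iUnion₂.1 (of_not_not fun h => hzV ⟨hcl hz, h⟩)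
  exact mem_biUnion hi
    ⟨hzi, fun h => (disjoint_closure_sdiff_biUnion_interior hi).ne_of_mem hz h rfl⟩

end RemoveClosed

section Cut

variable {X : Type u} [TopologicalSpace X]

/-- In a chart, `C` is a closed arc around `x`, and `O true`, `O false` are the open half-arcs on
either side of `x`, reaching beyond the endpoints of `C` (empty when that side misses `U`). -/
structure IsOrderlyCut (U G : Set X) (x : X) (C : Set X) (O : Bool → Set X) : Prop where
  isClosed : IsClosed C
  subset : C ⊆ G
  mem_interior : x ∈ interior C
  subset_closure_interior : C ⊆ closure (interior C)
  finite_sdiff_interior : (C \ interior C).Finite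
  isOpen_piece (b : Bool) : IsOpen (O b)
  piece_subset (b : Bool) : O b ⊆ G
  pairwise_disjoint_pieces : Pairwise (Disjoint on O)
  inter_subset_pieces : C ∩ U ⊆ O true ∪ O false
  isPreconnected_piece (b : Bool) : IsPreconnected (O b ∩ (U \ C))

section Chart

variable {γ : Type*} [LinearOrder γ] [TopologicalSpace γ] [OrderTopology γ] [PreconnectedSpace γ]
  {ψ : γ → X} {U : Set X} {ℓ : γ}

theorem exists_piece_Ioi (hψ : IsOpenEmbedding ψ)
    (hside : ψ '' Ioi ℓ ⊆ U ∨ Disjoint (ψ '' Ioi ℓ) U) :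
    ∃ b, Iic b ∈ 𝓝 ℓ ∧ ∃ O, IsOpen O ∧ O ⊆ ψ '' Ioi ℓ ∧ ψ '' Ioc ℓ b ∩ U ⊆ O ∧
      ∀ a ≤ ℓ, IsPreconnected (O ∩ (U \ ψ '' Icc a b)) := by
  have := denselyOrdered_of_preconnectedSpace (α := γ)
  obtain ⟨b, c, hb, hbc⟩ := exists_Iic_mem_nhds_Ioc_subset_Ioo ℓ
  refine ⟨b, hb, ?_⟩
  rcases hside with hU | hU
  · refine ⟨ψ '' Ioo ℓ c, hψ.isOpenMap _ isOpen_Ioo, image_mono Ioo_subset_Ioi_self,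
      fun z hz => image_mono hbc hz.1, fun a ha => ?_⟩
    have hℓb : ℓ ≤ b := mem_Iic.1 (mem_of_mem_nhds hb)
    have hdiff : ψ '' Ioo ℓ c ∩ (U \ ψ '' Icc a b) = ψ '' Ioo b c := by
      rw [← inter_sdiff_assoc, inter_eq_left.2 ((image_mono Ioo_subset_Ioi_self).trans hU),
        ← image_sdiff hψ.injective]
      congr 1
      ext z
      simp only [mem_sdiff, mem_Ioo, mem_Icc]
      grind
    rw [hdiff]
    exact ordConnected_Ioo.isPreconnected_of_preconnectedSpace.image _ hψ.continuous.continuousOn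
  · exact ⟨∅, isOpen_empty, empty_subset _,
      fun z hz => (hU.ne_of_mem (image_mono Ioc_subset_Ioi_self hz.1) hz.2 rfl).elim,
      fun _ _ => by simpa using isPreconnected_empty⟩

theorem exists_piece_Iio (hψ : IsOpenEmbedding ψ)
    (hside : ψ '' Iio ℓ ⊆ U ∨ Disjoint (ψ '' Iio ℓ) U) :
    ∃ b, Ici b ∈ 𝓝 ℓ ∧ ∃ O, IsOpen O ∧ O ⊆ ψ '' Iio ℓ ∧ ψ '' Ico b ℓ ∩ U ⊆ O ∧
      ∀ a ≥ ℓ, IsPreconnected (O ∩ (U \ ψ '' Icc b a)) := by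
  have : PreconnectedSpace γᵒᵈ := ‹PreconnectedSpace γ›
  have himage : ∀ s : Set γ, (ψ ∘ OrderDual.ofDual) '' (OrderDual.ofDual ⁻¹' s) = ψ '' s :=
    fun s => by rw [image_comp, OrderDual.ofDual.image_preimage]
  obtain ⟨b, hb, O, hO, hOℓ, hOU, hOc⟩ := exists_piece_Ioi (γ := γᵒᵈ)
    (ψ := ψ ∘ OrderDual.ofDual) (ℓ := OrderDual.toDual ℓ) hψ (by rwa [Ioi_toDual, himage])
  refine ⟨OrderDual.ofDual b, hb, O, hO, ?_, ?_, fun a ha => ?_⟩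
  · rwa [Ioi_toDual, himage] at hOℓ
  · rwa [← OrderDual.toDual_ofDual b, Ioc_toDual, himage] at hOU
  · have := hOc (OrderDual.toDual a) ha
    rwa [← OrderDual.toDual_ofDual b, Icc_toDual, himage] at this

theorem exists_isOrderlyCut_of_chart (hψ : IsOpenEmbedding ψ)
    (hIcc : ∀ a b, IsClosed (ψ '' Icc a b)) (hU : IsOpen U) (hℓU : ψ ℓ ∉ U) {G : Set X}
    (hψG : range ψ ⊆ G) (hGK : G ∩ (closure U \ U) ⊆ {ψ ℓ}) :
    ∃ C O, IsOrderlyCut U G (ψ ℓ) C O := by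
  have := denselyOrdered_of_preconnectedSpace (α := γ)
  have hside : ∀ s : Set γ, s.OrdConnected → ℓ ∉ s → ψ '' s ⊆ U ∨ Disjoint (ψ '' s) U := by
    refine fun s hs hℓs => (hs.isPreconnected_of_preconnectedSpace.image _
      hψ.continuous.continuousOn).subset_or_disjoint hU (Set.disjoint_left.2 ?_)
    rintro _ ⟨w, hw, rfl⟩ hwK
    exact hℓs (hψ.injective (hGK ⟨hψG (mem_range_self w), hwK⟩) ▸ hw)
  obtain ⟨bp, hbp, Oᵣ, hOᵣo, hOᵣℓ, hOᵣU, hOᵣc⟩ :=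
    exists_piece_Ioi hψ (hside _ ordConnected_Ioi (lt_irrefl ℓ))
  obtain ⟨bm, hbm, Oₗ, hOₗo, hOₗℓ, hOₗU, hOₗc⟩ :=
    exists_piece_Iio hψ (hside _ ordConnected_Iio (lt_irrefl ℓ))
  have hIcc_nhds : Icc bm bp ∈ 𝓝 ℓ := Ici_inter_Iic (a := bm) (b := bp) ▸ Filter.inter_mem hbm hbp
  have hrange : ∀ s, ψ '' s ⊆ G := fun s => (image_subset_range ψ s).trans hψG
  refine ⟨ψ '' Icc bm bp, fun b => cond b Oᵣ Oₗ,
    { isClosed := hIcc bm bp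
      subset := hrange _
      mem_interior := mem_interior_iff_mem_nhds.2 (hψ.isOpenMap.image_mem_nhds hIcc_nhds)
      subset_closure_interior := hψ.isOpenMap.image_subset_closure_interior hψ.continuous
        (Icc_subset_closure_interior_Icc hIcc_nhds)
      finite_sdiff_interior := ((toFinite {bm, bp}).image ψ).subset
        (hψ.isOpenMap.image_Icc_sdiff_interior_subset bm bp)
      isOpen_piece := fun b => by cases b; exacts [hOₗo, hOᵣo]
      piece_subset := fun b => by cases b; exacts [hOₗℓ.trans (hrange _), hOᵣℓ.trans (hrange _)]
      pairwise_disjoint_pieces := pairwise_disjoint_on_bool.2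
        (((disjoint_image_iff hψ.injective).2 Ioi_disjoint_Iio_same).mono hOᵣℓ hOₗℓ)
      inter_subset_pieces := ?_
      isPreconnected_piece := fun b => by
        cases b
        exacts [hOₗc bp (mem_Iic.1 (mem_of_mem_nhds hbp)),
          hOᵣc bm (mem_Ici.1 (mem_of_mem_nhds hbm))] }⟩
  rintro _ ⟨⟨w, hw, rfl⟩, hwU⟩
  rcases lt_trichotomy w ℓ with h | rfl | h
  · exact .inr (hOₗU ⟨⟨w, ⟨hw.1, h⟩, rfl⟩, hwU⟩)
  · exact (hℓU hwU).elim
  · exact .inl (hOᵣU ⟨⟨w, ⟨h, hw.2⟩, rfl⟩, hwU⟩)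

end Chart

theorem exists_preconnected_chart [RegularSpace X] [LocallyConnectedSpace X] {x : X}
    (hx : x ∈ LO X) {G : Set X} (hG : G ∈ 𝓝 x) :
    ∃ (γ : Type u) (_ : LinearOrder γ) (_ : TopologicalSpace γ) (_ : OrderTopology γ)
      (_ : PreconnectedSpace γ) (ψ : γ → X), IsOpenEmbedding ψ ∧ x ∈ range ψ ∧ range ψ ⊆ G ∧
        ∀ a b, IsClosed (ψ '' Icc a b) := by
  obtain ⟨W, hWo, hxW, β, _, _, _, ⟨e⟩⟩ := hx
  -- Keeping the chart inside a closed `t ⊆ W` makes images of closed intervals closed in `X`.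
  obtain ⟨t, ht, htc, htGW⟩ :=
    exists_mem_nhds_isClosed_subset (Filter.inter_mem hG (hWo.mem_nhds hxW))
  obtain ⟨I, hIt, hIo, hxI, hIc⟩ :=
    locallyConnectedSpace_iff_subsets_isOpen_isConnected.1 ‹_› x t ht
  set φ : β → X := (↑) ∘ e.symm
  have hφ : IsOpenEmbedding φ := hWo.isOpenEmbedding_subtypeVal.comp e.symm.isOpenEmbedding
  have htφ : t ⊆ range φ := by
    rw [range_comp, e.symm.range_coe, image_univ, Subtype.range_coe]
    exact fun z hz => (htGW hz).2
  have hI : φ '' (φ ⁻¹' I) = I := image_preimage_eq_of_subset (hIt.trans htφ)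
  have hpre : IsPreconnected (φ ⁻¹' I) := by
    rw [← hφ.isInducing.isPreconnected_image, hI]
    exact hIc.isPreconnected
  have hIord := hpre.ordConnected
  have := Subtype.preconnectedSpace hpre
  have hrange : range (φ ∘ (↑) : φ ⁻¹' I → X) = I := by rw [range_comp, Subtype.range_coe, hI]
  refine ⟨φ ⁻¹' I, inferInstance, inferInstance, inferInstance, inferInstance, φ ∘ (↑),
    hφ.comp (hIo.preimage hφ.continuous).isOpenEmbedding_subtypeVal, by rwa [hrange],
    by rw [hrange]; exact hIt.trans fun z hz => (htGW hz).1, fun a b => ?_⟩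
  rw [image_comp, image_subtype_val_Icc]
  refine hφ.isInducing.isClosed_image_of_closure_subset_range isClosed_Icc ?_
  calc closure (φ '' Icc ↑a ↑b) ⊆ closure I :=
        closure_mono (image_subset_iff.2 (hIord.out a.2 b.2))
    _ ⊆ range φ := (closure_minimal hIt htc).trans htφ

theorem exists_isOrderlyCut_family [T3Space X] [LocallyConnectedSpace X] {U D : Set X}
    (hU : IsOpen U) (hK : (closure U \ U).Finite) (hKLO : closure U \ U ⊆ LO X) (hD : IsOpen D)
    (hKD : closure U \ U ⊆ D) {p : X} (hp : p ∈ U) :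
    ∃ (G C : X → Set X) (O : X → Bool → Set X), (closure U \ U).PairwiseDisjoint G ∧
      ∀ x ∈ closure U \ U, IsOrderlyCut U (G x) x (C x) (O x) ∧ G x ⊆ (D ∩ LO X) \ {p} := by
  obtain ⟨S, hS, hSd⟩ := hK.t2_separation
  set G := fun x => S x ∩ ((D ∩ LO X) \ {p})
  have hcut : ∀ x ∈ closure U \ U, ∃ C O, IsOrderlyCut U (G x) x C O := by
    intro x hx
    have hxG : x ∈ G x := ⟨(hS x).1, ⟨hKD hx, hKLO hx⟩, fun h => hx.2 (h ▸ hp)⟩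
    obtain ⟨γ, _, _, _, _, ψ, hψ, ⟨ℓ, rfl⟩, hψG, hIcc⟩ := exists_preconnected_chart (hKLO hx)
      (((hS _).2.inter ((hD.inter isOpen_LO).sdiff isClosed_singleton)).mem_nhds hxG)
    refine exists_isOrderlyCut_of_chart hψ hIcc hU hx.2 hψG fun z ⟨hzG, hzK⟩ => ?_
    by_contra hzx
    exact (hSd hzK hx hzx).ne_of_mem (hS z).1 hzG.1 rfl
  choose! C O hCO using hcut
  exact ⟨G, C, O, hSd.mono fun x => inter_subset_left, fun x hx => ⟨hCO x hx, inter_subset_right⟩⟩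

theorem isPreconnected_sdiff_biUnion_of_isOrderlyCut {U K : Set X} {G C : X → Set X}
    {O : X → Bool → Set X} (hU : IsPreconnected U) (hUo : IsOpen U) (hK : K.Finite)
    (hG : K.PairwiseDisjoint G) (hcut : ∀ x ∈ K, IsOrderlyCut U (G x) x (C x) (O x)) :
    IsPreconnected (U \ ⋃ x ∈ K, C x) := by
  have hOV : ∀ x ∈ K, ∀ b, O x b ∩ (U \ ⋃ y ∈ K, C y) = O x b ∩ (U \ C x) := by
    intro x hx b
    refine (inter_subset_inter_right _
      (sdiff_subset_sdiff_right (subset_biUnion_of_mem hx))).antisymm ?_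
    rintro z ⟨hzO, hzU, hzC⟩
    refine ⟨hzO, hzU, fun h => ?_⟩
    obtain ⟨y, hy, hzy⟩ := mem_iUnion₂.1 h
    rcases eq_or_ne x y with rfl | hxy
    · exact hzC hzy
    · exact (hG hx hy hxy).ne_of_mem ((hcut x hx).piece_subset b hzO) ((hcut y hy).subset hzy) rfl
  refine hU.of_subset_union_iUnion (O := fun j : K × Bool => O j.1 j.2) sdiff_subset
    (hUo.sdiff (hK.isClosed_biUnion fun x hx => (hcut x hx).isClosed))
    (fun j => (hcut j.1 j.1.2).isOpen_piece j.2) ?_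
    (fun j => hOV j.1 j.1.2 j.2 ▸ (hcut j.1 j.1.2).isPreconnected_piece j.2) ?_
  · rintro ⟨⟨x, hx⟩, b⟩ ⟨⟨y, hy⟩, b'⟩ hne
    rcases eq_or_ne x y with rfl | hxy
    · exact (hcut x hx).pairwise_disjoint_pieces fun h => hne (Prod.ext rfl h)
    · exact (hG hx hy hxy).mono ((hcut x hx).piece_subset b) ((hcut y hy).piece_subset b')
  · intro z hz
    by_cases hzC : z ∈ ⋃ x ∈ K, C x
    · obtain ⟨x, hx, hzx⟩ := mem_iUnion₂.1 hzC
      rcases (hcut x hx).inter_subset_pieces ⟨hzx, hz⟩ with h | h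
      · exact .inr (mem_iUnion.2 ⟨(⟨x, hx⟩, true), h⟩)
      · exact .inr (mem_iUnion.2 ⟨(⟨x, hx⟩, false), h⟩)
    · exact .inl ⟨hz, hzC⟩

theorem orderly_sdiff_biUnion_of_isOrderlyCut {U : Set X} {G C : X → Set X}
    {O : X → Bool → Set X} (hUo : IsOpen U) (hUc : IsPreconnected U)
    (hK : (closure U \ U).Finite) (hG : (closure U \ U).PairwiseDisjoint G)
    (hcut : ∀ x ∈ closure U \ U, IsOrderlyCut U (G x) x (C x) (O x))
    (hGLO : ∀ x ∈ closure U \ U, G x ⊆ LO X) (hne : (U \ ⋃ x ∈ closure U \ U, C x).Nonempty) :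
    Orderly (U \ ⋃ x ∈ closure U \ U, C x) := by
  have hVo : IsOpen (U \ ⋃ x ∈ closure U \ U, C x) :=
    hUo.sdiff (hK.isClosed_biUnion fun x hx => (hcut x hx).isClosed)
  have hcl := closure_sdiff_biUnion_subset fun x hx => ⟨x, hx, (hcut x hx).mem_interior⟩
  have hfr := closure_sdiff_biUnion_sdiff_subset hcl
  exact ⟨hVo, sdiff_biUnion_eq_interior_closure hVo hcl fun x hx =>
      (hcut x hx).subset_closure_interior,
    ⟨hne, isPreconnected_sdiff_biUnion_of_isOrderlyCut hUc hUo hK hG hcut⟩,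
    (hK.biUnion fun x hx => (hcut x hx).finite_sdiff_interior).subset hfr,
    hfr.trans (iUnion₂_subset fun x hx =>
      sdiff_subset.trans ((hcut x hx).subset.trans (hGLO x hx)))⟩

end Cut

theorem stmt_4_general {X : Type u} [TopologicalSpace X] (n : ℕ) (L : Fin n → Set X)
    (hclosed : ∀ i, IsClosed (L i)) (hcomp : ∀ i, IsCompact (L i))
    (hconn : ∀ i, IsConnected (L i)) (hlots : ∀ i, IsLOTS ↥(L i))
    (hcover : ⋃ i, L i = Set.univ)
    (p : X) (U : Set X) (hU : Orderly U) (hpU : p ∈ U)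
    (D : Set X) (hDopen : IsOpen D)
    (hbd : closure U \ U ⊆ D) :
    ∃ V : Set X, Orderly V ∧ p ∈ V ∧ closure V ⊆ U ∧ U \ V ⊆ D := by
  have : T2Space X := t2Space_of_isClosed_cover hclosed hcover fun i => (hlots i).t2Space
  have : CompactSpace X := ⟨hcover ▸ isCompact_iUnion hcomp⟩
  have : LocallyConnectedSpace X := locallyConnectedSpace_of_isClosed_cover hclosed hcover
    fun i => have := Subtype.preconnectedSpace (hconn i).isPreconnected
      (hlots i).locallyConnectedSpace
  obtain ⟨hUo, -, hUc, hKfin, hKLO⟩ := hU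
  obtain ⟨G, C, O, hGd, hcut⟩ := exists_isOrderlyCut_family hUo hKfin hKLO hDopen hbd hpU
  have hCG x hx : C x ⊆ (D ∩ LO X) \ {p} := (hcut x hx).1.subset.trans (hcut x hx).2
  have hpV : p ∈ U \ ⋃ x ∈ closure U \ U, C x :=
    ⟨hpU, fun h => let ⟨x, hx, hpx⟩ := mem_iUnion₂.1 h; (hCG x hx hpx).2 rfl⟩
  refine ⟨_, orderly_sdiff_biUnion_of_isOrderlyCut hUo hUc.isPreconnected hKfin hGd
      (fun x hx => (hcut x hx).1) (fun x hx => (hcut x hx).2.trans fun _ hz => hz.1.2) ⟨p, hpV⟩,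
    hpV, closure_sdiff_biUnion_subset fun x hx => ⟨x, hx, (hcut x hx).1.mem_interior⟩, ?_⟩
  rw [sdiff_sdiff_right_self]
  rintro z ⟨-, hz⟩
  obtain ⟨x, hx, hzx⟩ := mem_iUnion₂.1 hz
  exact (hCG x hx hzx).1.1

theorem stmt_4 {X : Type u} [TopologicalSpace X] (n : ℕ) (L : Fin n → Set X)
    (hclosed : ∀ i, IsClosed (L i)) (hcomp : ∀ i, IsCompact (L i))
    (hconn : ∀ i, IsConnected (L i)) (hlots : ∀ i, IsLOTS ↥(L i))
    (hcover : ⋃ i, L i = Set.univ)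
    (p : X) (U : Set X) (hU : Orderly U) (hpU : p ∈ U)
    (D : Set X) (hDopen : IsOpen D) (hD : Dense D)
    (hbd : closure U \ U ⊆ D) :
    ∃ V : Set X, Orderly V ∧ p ∈ V ∧ closure V ⊆ U ∧ U \ V ⊆ D :=
  stmt_4_general n L hclosed hcomp hconn hlots hcover p U hU hpU D hDopen hbd
end

section
/- Let L and M be compact connected linearly ordered topological spaces. Then Hom_p(L ⊕ M), the homeomorphism group of the topological sum (disjoint union) of L and M with the topology of pointwise convergence, is a topological group. -/
open Set Topology

universe u

/-!
A homeomorphism of `L ⊕ M` restricted to a component is a continuous injection of a compact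
connected linear order into a linear order, hence strictly monotone or antitone. It therefore maps
an interval `[a, c]` into every order-convex set containing the images of `a` and `c`, so
controlling a homeomorphism at the two endpoints controls it on a whole neighbourhood: evaluation
`Hom_p(X) × X → X` is jointly continuous. This gives continuity of composition directly, and, `X`
being compact, continuity of inversion: `g⁻¹ x ∈ U` as soon as `g` misses `x` on the compact set
`Uᶜ`, which is an open condition on `g`.
-/

open Filter

section CompactOrder

variable {α : Type*} [LinearOrder α] [TopologicalSpace α] [CompactSpace α]

theorem exists_isLUB_of_compactSpace [OrderClosedTopology α] [Nonempty α] (s : Set α) :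
    ∃ x, IsLUB s x := by
  have hclosed : IsClosed (upperBounds s) := by
    have : upperBounds s = ⋂ a ∈ s, Ici a := by ext; simp [upperBounds]
    exact this ▸ isClosed_biInter fun _ _ => isClosed_Ici
  obtain ⟨t, -, ht⟩ := isCompact_univ.exists_isGreatest (univ_nonempty (α := α))
  exact hclosed.isCompact.exists_isLeast ⟨t, fun y _ => ht (mem_univ y)⟩

variable (α) in
noncomputable abbrev CompactSpace.toConditionallyCompleteLinearOrder [OrderClosedTopology α]
    [Nonempty α] : ConditionallyCompleteLinearOrder α :=
  letI : SupSet α := ⟨fun s => Classical.epsilon (IsLUB s)⟩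
  { ‹LinearOrder α›, conditionallyCompleteLatticeOfLatticeOfsSup α
      (fun s _ _ => Classical.epsilon_spec (exists_isLUB_of_compactSpace s)) with
    csSup_of_not_bddAbove := fun s hs => (hs (isCompact_univ.bddAbove.mono (subset_univ s))).elim
    csInf_of_not_bddBelow := fun s hs => (hs (isCompact_univ.bddBelow.mono (subset_univ s))).elim }

variable [OrderTopology α] [ConnectedSpace α] {β : Type*} [LinearOrder β] [TopologicalSpace β]
  [OrderClosedTopology β]

theorem Continuous.mapsTo_Icc_of_injective {φ : α → β} (hφ : Continuous φ)
    (hinj : Function.Injective φ) {I : Set β} (hI : I.OrdConnected) {a c : α}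
    (ha : φ a ∈ I) (hc : φ c ∈ I) : MapsTo φ (Icc a c) I := by
  let _ := CompactSpace.toConditionallyCompleteLinearOrder α
  have : DenselyOrdered α := denselyOrdered_of_preconnectedSpace
  rcases hφ.strictMono_of_inj hinj with hmono | hanti
  · exact fun x hx => hI.out ha hc ⟨hmono.monotone hx.1, hmono.monotone hx.2⟩
  · exact fun x hx => hI.out hc ha ⟨hanti.antitone hx.2, hanti.antitone hx.1⟩

theorem Continuous.mapsTo_Icc_image_of_injective {X : Type*} [TopologicalSpace X] {e : β → X}
    (he : IsEmbedding e) (hrange : IsClopen (range e)) {k : α → X} (hk : Continuous k)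
    (hinj : Function.Injective k) {I : Set β} (hI : I.OrdConnected) {a c : α}
    (ha : k a ∈ e '' I) (hc : k c ∈ e '' I) : MapsTo k (Icc a c) (e '' I) := by
  have hsub : range k ⊆ range e := (isPreconnected_range hk).subset_isClopen hrange
    ⟨k a, mem_range_self a, image_subset_range _ _ ha⟩
  choose φ hφ using fun y => hsub (mem_range_self y)
  obtain rfl : k = e ∘ φ := funext fun y => (hφ y).symm
  have hmem : ∀ {y}, e (φ y) ∈ e '' I → φ y ∈ I := he.injective.mem_set_image.1
  have hφc : Continuous φ := he.continuous_iff.2 hk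
  exact fun y hy => mem_image_of_mem e
    (hφc.mapsTo_Icc_of_injective hinj.of_comp hI (hmem ha) (hmem hc) hy)

end CompactOrder

section PointwiseHomeomorph

variable {X : Type*} [TopologicalSpace X]

theorem continuous_homPt_apply (x : X) : Continuous fun f : X ≃ₜ X => f x :=
  (continuous_apply x).comp continuous_induced_dom

theorem continuous_homPt_trans (heval : Continuous fun p : (X ≃ₜ X) × X => p.1 p.2) :
    Continuous fun p : (X ≃ₜ X) × (X ≃ₜ X) => p.2.trans p.1 :=
  continuous_induced_rng.2 <| continuous_pi fun x =>
    heval.comp (continuous_fst.prodMk ((continuous_homPt_apply x).comp continuous_snd))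

theorem continuous_homPt_symm [CompactSpace X] [T1Space X]
    (heval : Continuous fun p : (X ≃ₜ X) × X => p.1 p.2) :
    Continuous fun f : X ≃ₜ X => f.symm := by
  refine continuous_induced_rng.2 <| continuous_pi fun x =>
    continuous_iff_continuousAt.2 fun f₀ U hU => mem_map.2 ?_
  obtain ⟨V, hVU, hV, hf₀V⟩ := mem_nhds_iff.1 hU
  have hmiss : ∀ᶠ f in 𝓝 f₀, ∀ y ∈ Vᶜ, f y ≠ x :=
    hV.isClosed_compl.isCompact.eventually_forall_of_forall_eventually fun y hy =>
      heval.continuousAt.eventually_ne fun hy' => hy (by simpa [← hy'] using hf₀V)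
  filter_upwards [hmiss] with f hf
  exact hVU (not_not.1 fun hfx => hf _ hfx (f.apply_symm_apply x))

theorem continuousAt_homPt_eval_of_apply_eq {α β : Type*}
    [LinearOrder α] [TopologicalSpace α] [OrderTopology α] [CompactSpace α] [ConnectedSpace α]
    [LinearOrder β] [TopologicalSpace β] [OrderTopology β]
    {e : α → X} (he : IsOpenEmbedding e) {e' : β → X} (he' : IsOpenEmbedding e')
    (hclosed : IsClosed (range e')) {f₀ : X ≃ₜ X} {x : α} {y : β} (hy : f₀ (e x) = e' y) :
    ContinuousAt (fun p : (X ≃ₜ X) × X => p.1 p.2) (f₀, e x) := by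
  intro W hW
  change W ∈ 𝓝 (f₀ (e x)) at hW
  rw [hy] at hW
  refine mem_map.2 ?_
  obtain ⟨l, u, -, hlu, hluW⟩ := exists_Icc_mem_subset_of_mem_nhds
    (he'.continuous.continuousAt.preimage_mem_nhds hW)
  set V := e' '' interior (Icc l u)
  have hV : IsOpen V := he'.isOpenMap _ isOpen_interior
  have hVW : V ⊆ e' '' Icc l u := image_mono interior_subset
  have hf₀x : f₀ (e x) ∈ V := hy ▸ mem_image_of_mem e' (mem_interior_iff_mem_nhds.2 hlu)
  obtain ⟨a, c, hx, hac, hacV⟩ := exists_Icc_mem_subset_of_mem_nhds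
    ((f₀.continuous.comp he.continuous).continuousAt.preimage_mem_nhds (hV.mem_nhds hf₀x))
  have hends : ∀ᶠ f in 𝓝 f₀, f (e a) ∈ V ∧ f (e c) ∈ V :=
    ((continuous_homPt_apply _).continuousAt.eventually_mem
        (hV.mem_nhds (hacV ⟨le_rfl, hx.1.trans hx.2⟩))).and
      ((continuous_homPt_apply _).continuousAt.eventually_mem
        (hV.mem_nhds (hacV ⟨hx.1.trans hx.2, le_rfl⟩)))
  filter_upwards [prod_mem_nhds hends (he.image_mem_nhds.2 hac)]
  rintro ⟨f, -⟩ ⟨⟨hfa, hfc⟩, z, hz, rfl⟩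
  have hmaps := (f.continuous.comp he.continuous).mapsTo_Icc_image_of_injective he'.isEmbedding
    ⟨hclosed, he'.isOpen_range⟩ (f.injective.comp he.injective) ordConnected_Icc (hVW hfa)
    (hVW hfc)
  exact image_subset_iff.2 hluW (hmaps hz)

end PointwiseHomeomorph

theorem continuous_homPt_eval_sum {L M : Type*}
    [LinearOrder L] [TopologicalSpace L] [OrderTopology L] [CompactSpace L] [ConnectedSpace L]
    [LinearOrder M] [TopologicalSpace M] [OrderTopology M] [CompactSpace M] [ConnectedSpace M] :
    Continuous fun p : ((L ⊕ M) ≃ₜ (L ⊕ M)) × (L ⊕ M) => p.1 p.2 := by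
  refine continuous_iff_continuousAt.2 fun ⟨f, x⟩ => ?_
  rcases x with x | x <;> rcases hfx : f _ with y | y
  · exact continuousAt_homPt_eval_of_apply_eq .inl .inl isClosed_range_inl hfx
  · exact continuousAt_homPt_eval_of_apply_eq .inl .inr isClosed_range_inr hfx
  · exact continuousAt_homPt_eval_of_apply_eq .inr .inl isClosed_range_inl hfx
  · exact continuousAt_homPt_eval_of_apply_eq .inr .inr isClosed_range_inr hfx

/-- Hom_p(L ⊕ M) is a topological group for compact connected LOTS L and M. -/
theorem stmt_11 {L M : Type u}
    [LinearOrder L] [TopologicalSpace L] [OrderTopology L] [CompactSpace L] [ConnectedSpace L]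
    [LinearOrder M] [TopologicalSpace M] [OrderTopology M] [CompactSpace M] [ConnectedSpace M] :
    Continuous (fun p : ((L ⊕ M) ≃ₜ (L ⊕ M)) × ((L ⊕ M) ≃ₜ (L ⊕ M)) => p.2.trans p.1) ∧
      Continuous (fun f : (L ⊕ M) ≃ₜ (L ⊕ M) => f.symm) :=
  ⟨continuous_homPt_trans continuous_homPt_eval_sum, continuous_homPt_symm continuous_homPt_eval_sum⟩
end
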